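/- Fix i ∈ [n] and suppose |E_t| − |N_i(t)| ≥ 1 for all t ≥ 0. Let Z_t = ∑_{p,q ∈ [n]} [ε² ∧ (x_p(t) − x_q(t))²] ∨ (ε²·𝟙{(p,q) ∉ E}). Then for all t ≥ 0 and k ≥ 0, (x_i(t) − x_i(t+k))² ≤ (k/4)·(Z_t − Z_{t+k}). -/

import Mathlib

open Finset
open scoped Classical

/-- The threshold graph `G_t`: social neighbors whose garbage differs by at most `ε`. -/
def Gt {n : ℕ} (G : SimpleGraph (Fin n)) (x : ℕ → Fin n → ℝ) (ε : ℝ) (t : ℕ) :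
    SimpleGraph (Fin n) where
  Adj i j := G.Adj i j ∧ |x t i - x t j| ≤ ε
  symm := by
    constructor
    intro i j h
    exact ⟨h.1.symm, by rw [abs_sub_comm]; exact h.2⟩
  loopless := by
    constructor
    intro i h
    exact G.irrefl h.1

/-- `|E_t|`: the number of edges of `G_t`. -/
noncomputable def Ecard {n : ℕ} (G : SimpleGraph (Fin n)) (x : ℕ → Fin n → ℝ) (ε : ℝ)
    (t : ℕ) : ℕ :=
  (Gt G x ε t).edgeSet.ncard

/-- `N_i(t)`: the neighbors of `i` in `G_t`, as a finset. -/
noncomputable def Nb {n : ℕ} (G : SimpleGraph (Fin n)) (x : ℕ → Fin n → ℝ) (ε : ℝ)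
    (t : ℕ) (i : Fin n) : Finset (Fin n) :=
  Finset.univ.filter fun j => (Gt G x ε t).Adj i j

/-- The update rule of the garbage disposal game. -/
def Update {n : ℕ} (G : SimpleGraph (Fin n)) (x : ℕ → Fin n → ℝ) (ε : ℝ) : Prop :=
  ∀ t i,
    x (t + 1) i =
      (if (Gt G x ε t).edgeSet.Nonempty then (1 : ℝ) else 0) / (Ecard G x ε t : ℝ) *
          ∑ j ∈ Nb G x ε t i, x t j +
        (1 - ((Nb G x ε t i).card : ℝ) / (Ecard G x ε t : ℝ) *
            (if (Gt G x ε t).edgeSet.Nonempty then (1 : ℝ) else 0)) * x t i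

/-- The Lyapunov functional `Z_t`. -/
noncomputable def Z {n : ℕ} (G : SimpleGraph (Fin n)) (x : ℕ → Fin n → ℝ) (ε : ℝ)
    (t : ℕ) : ℝ :=
  ∑ i, ∑ j,
    max (min (ε ^ 2) ((x t i - x t j) ^ 2)) (ε ^ 2 * if ¬ G.Adj i j then 1 else 0)

/-!
`Z_t` dominates the Dirichlet energy of the threshold graph `G_t`: a pair that is an edge of
`G_t` contributes exactly `(x_p - x_q)²` at time `t` and at most the new squared gap later, while
any other pair already contributes the maximal value `ε²`. One step of the game moves `x` by
`d` with `|E_t| d_p = ∑_{q ~ p} (x_q - x_p)`, which lowers the energy by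
`4 |E_t| ∑ d_p² - ∑_{p ~ q} (d_p - d_q)² ≥ 4 ∑_p (|E_t| - deg p) d_p² ≥ 4 d_i²`.
Summing `4 (x_i(s+1) - x_i(s))² ≤ Z_s - Z_{s+1}` over `k` steps with Cauchy–Schwarz gives
the estimate.
-/
namespace SimpleGraph

variable {V : Type*} [Fintype V] (H : SimpleGraph V) [DecidableRel H.Adj]

theorem sum_sum_neighborFinset_swap {M : Type*} [AddCommMonoid M] (f : V → V → M) :
    ∑ p, ∑ q ∈ H.neighborFinset p, f q p = ∑ p, ∑ q ∈ H.neighborFinset p, f p q := by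
  simp only [neighborFinset_eq_filter, sum_filter]
  rw [Finset.sum_comm]
  simp only [H.adj_comm]

def dirichletEnergy (y : V → ℝ) : ℝ :=
  ∑ p, ∑ q ∈ H.neighborFinset p, (y p - y q) ^ 2

theorem sum_sum_neighborFinset_mul_sub_eq {y d : V → ℝ} {m : ℝ}
    (hd : ∀ p, m * d p = ∑ q ∈ H.neighborFinset p, (y q - y p)) :
    ∑ p, ∑ q ∈ H.neighborFinset p, (y p - y q) * (d p - d q) = -2 * m * ∑ p, d p ^ 2 := by
  calc ∑ p, ∑ q ∈ H.neighborFinset p, (y p - y q) * (d p - d q)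
      = -(∑ p, ∑ q ∈ H.neighborFinset p, (y q - y p) * d p +
          ∑ p, ∑ q ∈ H.neighborFinset p, (y p - y q) * d q) := by
        simp only [← sum_add_distrib, ← sum_neg_distrib]
        exact sum_congr rfl fun p _ => sum_congr rfl fun q _ => by ring
    _ = -(2 * ∑ p, d p * ∑ q ∈ H.neighborFinset p, (y q - y p)) := by
        rw [H.sum_sum_neighborFinset_swap fun p q => (y q - y p) * d p, ← two_mul]
        simp only [mul_sum, mul_comm]
    _ = -2 * m * ∑ p, d p ^ 2 := by
        simp only [← hd, mul_sum]
        rw [← sum_neg_distrib]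
        exact sum_congr rfl fun p _ => by ring

theorem dirichletEnergy_sub_dirichletEnergy_add {y d : V → ℝ} {m : ℝ}
    (hd : ∀ p, m * d p = ∑ q ∈ H.neighborFinset p, (y q - y p)) :
    H.dirichletEnergy y - H.dirichletEnergy (y + d) =
      4 * m * ∑ p, d p ^ 2 - ∑ p, ∑ q ∈ H.neighborFinset p, (d p - d q) ^ 2 := by
  have expand : ∀ p q, (y p - y q) ^ 2 - ((y + d) p - (y + d) q) ^ 2 =
      -2 * ((y p - y q) * (d p - d q)) - (d p - d q) ^ 2 := fun p q => by
    simp only [Pi.add_apply]; ring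
  simp only [dirichletEnergy, ← sum_sub_distrib]
  rw [sum_congr rfl fun p _ => sum_congr rfl fun q _ => expand p q]
  simp only [sum_sub_distrib, ← mul_sum, H.sum_sum_neighborFinset_mul_sub_eq hd]
  ring

theorem sum_sum_neighborFinset_sub_sq_le (d : V → ℝ) :
    ∑ p, ∑ q ∈ H.neighborFinset p, (d p - d q) ^ 2 ≤
      4 * ∑ p, (H.degree p : ℝ) * d p ^ 2 := by
  calc ∑ p, ∑ q ∈ H.neighborFinset p, (d p - d q) ^ 2
      ≤ ∑ p, ∑ q ∈ H.neighborFinset p, (2 * d p ^ 2 + 2 * d q ^ 2) := by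
        gcongr with p _ q _
        nlinarith [sq_nonneg (d p + d q)]
    _ = 2 * ∑ p, ∑ q ∈ H.neighborFinset p, d p ^ 2 +
          2 * ∑ p, ∑ q ∈ H.neighborFinset p, d q ^ 2 := by
        simp only [sum_add_distrib, mul_sum]
    _ = 4 * ∑ p, (H.degree p : ℝ) * d p ^ 2 := by
        rw [← H.sum_sum_neighborFinset_swap fun _ q => d q ^ 2]
        simp only [sum_const, card_neighborFinset_eq_degree, nsmul_eq_mul]
        ring

theorem four_mul_sum_sub_degree_le_dirichletEnergy_sub {y d : V → ℝ} {m : ℝ}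
    (hd : ∀ p, m * d p = ∑ q ∈ H.neighborFinset p, (y q - y p)) :
    4 * ∑ p, (m - H.degree p) * d p ^ 2 ≤ H.dirichletEnergy y - H.dirichletEnergy (y + d) := by
  have split : ∑ p, (m - H.degree p) * d p ^ 2 =
      m * ∑ p, d p ^ 2 - ∑ p, (H.degree p : ℝ) * d p ^ 2 := by
    simp only [sub_mul, sum_sub_distrib, mul_sum]
  rw [H.dirichletEnergy_sub_dirichletEnergy_add hd, split]
  linarith [H.sum_sum_neighborFinset_sub_sq_le d]

end SimpleGraph

theorem sq_sub_le_mul_sub_of_sq_sub_succ_le {a Φ : ℕ → ℝ}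
    (h : ∀ s, (a (s + 1) - a s) ^ 2 ≤ Φ s - Φ (s + 1)) (t k : ℕ) :
    (a t - a (t + k)) ^ 2 ≤ k * (Φ t - Φ (t + k)) := by
  calc (a t - a (t + k)) ^ 2 = (∑ s ∈ range k, (a (t + (s + 1)) - a (t + s))) ^ 2 := by
        rw [sum_range_sub (fun s => a (t + s)), add_zero]
        ring
    _ ≤ k * ∑ s ∈ range k, (a (t + (s + 1)) - a (t + s)) ^ 2 := by
        simpa using sq_sum_le_card_mul_sum_sq (s := range k)
          (f := fun s => a (t + (s + 1)) - a (t + s))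
    _ ≤ k * ∑ s ∈ range k, (Φ (t + s) - Φ (t + (s + 1))) := by
        gcongr with s
        exact h _
    _ = k * (Φ t - Φ (t + k)) := by
        rw [sum_range_sub' (fun s => Φ (t + s)), add_zero]

noncomputable def pairPotential (ε : ℝ) (A : Prop) [Decidable A] (a : ℝ) : ℝ :=
  max (min (ε ^ 2) (a ^ 2)) (ε ^ 2 * if ¬ A then 1 else 0)

section pairPotential

variable {ε : ℝ} {A : Prop} [Decidable A]

theorem sq_sub_sq_le_pairPotential_sub (hA : A) {a : ℝ} (ha : |a| ≤ ε) (b : ℝ) :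
    a ^ 2 - b ^ 2 ≤ pairPotential ε A a - pairPotential ε A b := by
  have ha' : a ^ 2 ≤ ε ^ 2 := sq_le_sq' (abs_le.1 ha).1 (abs_le.1 ha).2
  simp only [pairPotential, hA, not_true_eq_false, if_false, mul_zero, min_eq_right ha',
    max_eq_left (sq_nonneg a)]
  linarith [max_le (min_le_right (ε ^ 2) (b ^ 2)) (sq_nonneg b)]

theorem pairPotential_sub_nonneg (hε : 0 ≤ ε) {a : ℝ} (ha : ¬(A ∧ |a| ≤ ε)) (b : ℝ) :
    0 ≤ pairPotential ε A a - pairPotential ε A b := by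
  have hb : pairPotential ε A b ≤ ε ^ 2 := by
    refine max_le (min_le_left _ _) ?_
    split_ifs <;> simp [sq_nonneg]
  have ha' : pairPotential ε A a = ε ^ 2 := by
    by_cases hA : A
    · have : ε ^ 2 ≤ a ^ 2 :=
        sq_le_sq.2 ((abs_of_nonneg hε).trans_le (not_le.1 (ha ⟨hA, ·⟩)).le)
      simp [pairPotential, hA, min_eq_left this, sq_nonneg]
    · simp [pairPotential, hA]
  linarith

end pairPotential

section GarbageDisposal

variable {n : ℕ} {G : SimpleGraph (Fin n)} {x : ℕ → Fin n → ℝ} {ε : ℝ}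

theorem Z_eq_sum_pairPotential (t : ℕ) :
    Z G x ε t = ∑ p, ∑ q, pairPotential ε (G.Adj p q) (x t p - x t q) := rfl

theorem Nb_eq_neighborFinset (t : ℕ) (p : Fin n) :
    Nb G x ε t p = (Gt G x ε t).neighborFinset p :=
  (SimpleGraph.neighborFinset_eq_filter _).symm

theorem degree_Gt_le_Ecard (t : ℕ) (p : Fin n) : (Gt G x ε t).degree p ≤ Ecard G x ε t := by
  rw [Ecard, ← SimpleGraph.coe_edgeFinset, Set.ncard_coe_finset]
  exact SimpleGraph.degree_le_card_edgeFinset _ _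

theorem Update.ecard_mul_sub (hupd : Update G x ε) {t : ℕ} (ht : Ecard G x ε t ≠ 0)
    (p : Fin n) : (Ecard G x ε t : ℝ) * (x (t + 1) p - x t p) =
      ∑ q ∈ (Gt G x ε t).neighborFinset p, (x t q - x t p) := by
  have hne : (Gt G x ε t).edgeSet.Nonempty := Set.nonempty_of_ncard_ne_zero ht
  have hm : (Ecard G x ε t : ℝ) ≠ 0 := Nat.cast_ne_zero.2 ht
  rw [hupd t p, if_pos hne, ← Nb_eq_neighborFinset, sum_sub_distrib, sum_const, nsmul_eq_mul]
  field_simp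
  ring

theorem dirichletEnergy_Gt_sub_le_Z_sub (hε : 0 ≤ ε) (t s : ℕ) :
    (Gt G x ε t).dirichletEnergy (x t) - (Gt G x ε t).dirichletEnergy (x s) ≤
      Z G x ε t - Z G x ε s := by
  simp only [SimpleGraph.dirichletEnergy, Z_eq_sum_pairPotential,
    SimpleGraph.neighborFinset_eq_filter, sum_filter, ← sum_sub_distrib]
  refine sum_le_sum fun p _ => sum_le_sum fun q _ => ?_
  split_ifs with hpq
  · exact sq_sub_sq_le_pairPotential_sub hpq.1 hpq.2 _
  · simpa using pairPotential_sub_nonneg hε hpq _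

theorem four_mul_sq_sub_le_Z_sub (hε : 0 ≤ ε) (hupd : Update G x ε) {i : Fin n} {t : ℕ}
    (ht : (Nb G x ε t i).card + 1 ≤ Ecard G x ε t) :
    4 * (x (t + 1) i - x t i) ^ 2 ≤ Z G x ε t - Z G x ε (t + 1) := by
  set H := Gt G x ε t
  set m : ℝ := (Ecard G x ε t : ℝ)
  set d := x (t + 1) - x t
  have hd : ∀ p, m * d p = ∑ q ∈ H.neighborFinset p, (x t q - x t p) :=
    hupd.ecard_mul_sub (by omega)
  have hdeg : ∀ p, (H.degree p : ℝ) ≤ m := fun p => Nat.cast_le.2 (degree_Gt_le_Ecard t p)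
  have hi : 1 ≤ m - H.degree i := by
    rw [Nb_eq_neighborFinset, SimpleGraph.card_neighborFinset_eq_degree] at ht
    have : ((H.degree i + 1 : ℕ) : ℝ) ≤ m := Nat.cast_le.2 ht
    push_cast at this
    linarith
  calc 4 * d i ^ 2 ≤ 4 * ((m - H.degree i) * d i ^ 2) := by nlinarith [sq_nonneg (d i)]
    _ ≤ 4 * ∑ p, (m - H.degree p) * d p ^ 2 := by
        gcongr
        exact single_le_sum (fun p _ => mul_nonneg (sub_nonneg.2 (hdeg p)) (sq_nonneg _))
          (mem_univ i)
    _ ≤ H.dirichletEnergy (x t) - H.dirichletEnergy (x t + d) :=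
        H.four_mul_sum_sub_degree_le_dirichletEnergy_sub hd
    _ ≤ Z G x ε t - Z G x ε (t + 1) := by
        rw [add_sub_cancel]
        exact dirichletEnergy_Gt_sub_le_Z_sub hε t (t + 1)

end GarbageDisposal

theorem cauchy_estimate_general {n : ℕ} (G : SimpleGraph (Fin n)) (x : ℕ → Fin n → ℝ)
    (ε : ℝ) (hε : 0 < ε) (hupd : Update G x ε)
    (i : Fin n) (h : ∀ t : ℕ, (Nb G x ε t i).card + 1 ≤ Ecard G x ε t) :
    ∀ t k : ℕ, (x t i - x (t + k) i) ^ 2 ≤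
      (k : ℝ) / 4 * (Z G x ε t - Z G x ε (t + k)) := by
  intro t k
  have step : ∀ s, (x (s + 1) i - x s i) ^ 2 ≤ Z G x ε s / 4 - Z G x ε (s + 1) / 4 :=
    fun s => by linarith [four_mul_sq_sub_le_Z_sub hε.le hupd (h s)]
  calc (x t i - x (t + k) i) ^ 2 ≤ k * (Z G x ε t / 4 - Z G x ε (t + k) / 4) :=
        sq_sub_le_mul_sub_of_sq_sub_succ_le (a := fun s => x s i) step t k
    _ = (k : ℝ) / 4 * (Z G x ε t - Z G x ε (t + k)) := by ring

/-- Cauchy-type estimate: `(x_i(t) − x_i(t+k))² ≤ (k/4)(Z_t − Z_{t+k})` when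
`|E_t| − |N_i(t)| ≥ 1` for all `t`. -/
theorem cauchy_estimate {n : ℕ} (G : SimpleGraph (Fin n)) (x : ℕ → Fin n → ℝ)
    (ε : ℝ) (hε : 0 < ε) (hx0 : ∀ i, 0 ≤ x 0 i) (hupd : Update G x ε)
    (i : Fin n) (h : ∀ t : ℕ, (Nb G x ε t i).card + 1 ≤ Ecard G x ε t) :
    ∀ t k : ℕ, (x t i - x (t + k) i) ^ 2 ≤
      (k : ℝ) / 4 * (Z G x ε t - Z G x ε (t + k)) :=
  cauchy_estimate_general G x ε hε hupd i h
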